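/- Let n, s, t be nonnegative integers with s + t ≥ 2 and n − s − 2t ≥ 1. Then diss(B(n,s,t)) = s + 2t + ⌈2(n − s − 2t − 1)/3⌉. -/
import Mathlib

/-- `S` is a dissociation set of `G`: the subgraph induced by `S` has maximum degree ≤ 1. -/
def IsDissocSet {V : Type} (G : SimpleGraph V) (S : Set V) : Prop :=
  ∀ v ∈ S, ({u ∈ S | G.Adj v u}).ncard ≤ 1

/-- The dissociation number of `G`: the maximum cardinality of a dissociation set. -/
noncomputable def dissNum {V : Type} [Fintype V] (G : SimpleGraph V) : ℕ :=
  sSup {k | ∃ S : Set V, IsDissocSet G S ∧ S.ncard = k}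

/-- `Bgraph n s t` is the tree `B(n,s,t)` of order `n`: a path on `n - s - 2t` vertices
(indexed `0, …, n-s-2t-1`), with `s` pendant vertices and `t` pendant paths of length 2
attached to the last vertex of the path. -/
def Bgraph (n s t : ℕ) :
    SimpleGraph (Fin (n - s - 2 * t) ⊕ (Fin s ⊕ Fin t × Fin 2)) :=
  SimpleGraph.fromRel (fun x y =>
    (∃ p q : Fin (n - s - 2 * t), x = Sum.inl p ∧ y = Sum.inl q ∧ (p : ℕ) + 1 = q) ∨
    (∃ p : Fin (n - s - 2 * t), ∃ i : Fin s,
      x = Sum.inl p ∧ (p : ℕ) = n - s - 2 * t - 1 ∧ y = Sum.inr (Sum.inl i)) ∨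
    (∃ p : Fin (n - s - 2 * t), ∃ j : Fin t,
      x = Sum.inl p ∧ (p : ℕ) = n - s - 2 * t - 1 ∧ y = Sum.inr (Sum.inr (j, 0))) ∨
    (∃ j : Fin t, x = Sum.inr (Sum.inr (j, 0)) ∧ y = Sum.inr (Sum.inr (j, 1))))

section Aux

variable (n s t : ℕ)

lemma adj_ll {p q : Fin (n - s - 2*t)} :
    (Bgraph n s t).Adj (Sum.inl p) (Sum.inl q) ↔ ((p:ℕ)+1 = q ∨ (q:ℕ)+1 = p) := by
  simp only [Bgraph, SimpleGraph.fromRel_adj]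
  constructor
  · rintro ⟨hne, h | h⟩ <;> aesop
  · intro h
    constructor
    · intro hpq
      have : p = q := by simpa using hpq
      omega
    · rcases h with h | h
      · left; left; exact ⟨p, q, rfl, rfl, h⟩
      · right; left; exact ⟨q, p, rfl, rfl, h⟩

lemma adj_li {p : Fin (n - s - 2*t)} {i : Fin s} :
    (Bgraph n s t).Adj (Sum.inl p) (Sum.inr (Sum.inl i)) ↔ (p:ℕ) = n - s - 2*t - 1 := by
  simp only [Bgraph, SimpleGraph.fromRel_adj]
  aesop

lemma adj_lj {p : Fin (n - s - 2*t)} {j : Fin t} {c : Fin 2} :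
    (Bgraph n s t).Adj (Sum.inl p) (Sum.inr (Sum.inr (j, c))) ↔
      ((p:ℕ) = n - s - 2*t - 1 ∧ c = 0) := by
  simp only [Bgraph, SimpleGraph.fromRel_adj]
  aesop

lemma adj_ii {i i' : Fin s} :
    ¬ (Bgraph n s t).Adj (Sum.inr (Sum.inl i)) (Sum.inr (Sum.inl i')) := by
  simp only [Bgraph, SimpleGraph.fromRel_adj]; aesop

lemma adj_ij {i : Fin s} {j : Fin t} {c : Fin 2} :
    ¬ (Bgraph n s t).Adj (Sum.inr (Sum.inl i)) (Sum.inr (Sum.inr (j, c))) := by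
  simp only [Bgraph, SimpleGraph.fromRel_adj]; aesop

lemma adj_jj {j j' : Fin t} {c c' : Fin 2} :
    (Bgraph n s t).Adj (Sum.inr (Sum.inr (j, c))) (Sum.inr (Sum.inr (j', c'))) ↔
      (j = j' ∧ ((c = 0 ∧ c' = 1) ∨ (c = 1 ∧ c' = 0))) := by
  simp only [Bgraph, SimpleGraph.fromRel_adj]
  constructor
  · rintro ⟨hne, h | h⟩ <;> aesop
  · rintro ⟨rfl, h | h⟩
    · obtain ⟨rfl, rfl⟩ := h
      exact ⟨by simp, Or.inl (Or.inr (Or.inr (Or.inr ⟨j, rfl, rfl⟩)))⟩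
    · obtain ⟨rfl, rfl⟩ := h
      exact ⟨by simp, Or.inr (Or.inr (Or.inr (Or.inr ⟨j, rfl, rfl⟩)))⟩

end Aux

lemma count_mod3 (M : ℕ) :
    ((Finset.range M).filter (fun x => x % 3 ≠ 2)).card = M - M / 3 := by
  induction M with
  | zero => simp
  | succ M ih =>
    rw [Finset.range_add_one, Finset.filter_insert]
    by_cases h : M % 3 ≠ 2
    · rw [if_pos h, Finset.card_insert_of_notMem (by simp), ih]
      omega
    · rw [if_neg h, ih]
      omega

lemma no3consec_card (M : ℕ) (T : Finset ℕ) (hT : ∀ x ∈ T, x < M)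
    (h3 : ∀ x, x ∈ T → x + 1 ∈ T → x + 2 ∈ T → False) : T.card ≤ M - M / 3 := by
  induction M using Nat.strong_induction_on generalizing T with
  | _ M ih =>
    by_cases hM : M < 3
    · calc T.card ≤ (Finset.range M).card :=
          Finset.card_le_card (fun x hx => Finset.mem_range.2 (hT x hx))
        _ = M := Finset.card_range M
        _ ≤ M - M / 3 := by omega
    · push_neg at hM
      have hsplit : T.card ≤ (T.filter (· < M - 3)).card + 2 := by
        have hsub : T.filter (fun x => ¬ x < M - 3) ⊆ {M - 3, M - 2, M - 1} := by
          intro x hx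
          simp only [Finset.mem_filter] at hx
          have := hT x hx.1
          simp only [Finset.mem_insert, Finset.mem_singleton]
          omega
        have hcard : (T.filter (fun x => ¬ x < M - 3)).card ≤ 2 := by
          by_contra hc
          have h3le : ({M - 3, M - 2, M - 1} : Finset ℕ).card ≤ 3 := by
            apply le_trans (Finset.card_insert_le _ _)
            have := Finset.card_insert_le (M - 2) ({M - 1} : Finset ℕ)
            simp only [Finset.card_singleton] at this
            omega
          have heqq : T.filter (fun x => ¬ x < M - 3) = {M - 3, M - 2, M - 1} :=
            Finset.eq_of_subset_of_card_le hsub (by omega)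
          have hm1 : M - 3 ∈ T := (Finset.mem_filter.1
            (heqq ▸ (by simp : M - 3 ∈ ({M - 3, M - 2, M - 1} : Finset ℕ)))).1
          have hm2 : M - 2 ∈ T := (Finset.mem_filter.1
            (heqq ▸ (by simp : M - 2 ∈ ({M - 3, M - 2, M - 1} : Finset ℕ)))).1
          have hm3 : M - 1 ∈ T := (Finset.mem_filter.1
            (heqq ▸ (by simp : M - 1 ∈ ({M - 3, M - 2, M - 1} : Finset ℕ)))).1
          have e1 : M - 3 + 1 = M - 2 := by omega
          have e2 : M - 3 + 2 = M - 1 := by omega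
          exact h3 (M - 3) hm1 (e1 ▸ hm2) (e2 ▸ hm3)
        calc T.card = (T.filter (· < M - 3)).card
              + (T.filter (fun x => ¬ x < M - 3)).card := by
              rw [Finset.card_filter_add_card_filter_not]
          _ ≤ (T.filter (· < M - 3)).card + 2 := by omega
      have hrec : (T.filter (· < M - 3)).card ≤ (M - 3) - (M - 3) / 3 := by
        apply ih (M - 3) (by omega)
        · intro x hx; exact (Finset.mem_filter.1 hx).2
        · intro x hx hx1 hx2
          exact h3 x (Finset.mem_filter.1 hx).1 (Finset.mem_filter.1 hx1).1
            (Finset.mem_filter.1 hx2).1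
      omega

lemma ncard_sum_decomp {α β : Type} [Finite α] [Finite β] (S : Set (α ⊕ β)) :
    S.ncard = {a | Sum.inl a ∈ S}.ncard + {b | Sum.inr b ∈ S}.ncard := by
  have hS : S = Sum.inl '' {a | Sum.inl a ∈ S} ∪ Sum.inr '' {b | Sum.inr b ∈ S} := by
    ext x; cases x <;> simp
  have hdisj : Disjoint (Sum.inl '' {a | Sum.inl a ∈ S})
      (Sum.inr '' {b | Sum.inr b ∈ S}) := by
    rw [Set.disjoint_left]
    rintro x ⟨a, _, rfl⟩ ⟨b, _, hb⟩
    exact Sum.inl_ne_inr hb.symm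
  conv_lhs => rw [hS]
  rw [Set.ncard_union_eq hdisj (Set.toFinite _) (Set.toFinite _),
    Set.ncard_image_of_injective _ Sum.inl_injective,
    Set.ncard_image_of_injective _ Sum.inr_injective]

lemma ncard_prod2_decomp {t : ℕ} (Q : Set (Fin t × Fin 2)) :
    Q.ncard = {j | (j, 0) ∈ Q}.ncard + {j | (j, 1) ∈ Q}.ncard := by
  have hQ : Q = (fun j => (j, (0 : Fin 2))) '' {j | (j, 0) ∈ Q}
      ∪ (fun j => (j, (1 : Fin 2))) '' {j | (j, 1) ∈ Q} := by
    ext ⟨j, c⟩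
    fin_cases c <;> simp
  have hdisj : Disjoint ((fun j => (j, (0 : Fin 2))) '' {j | (j, 0) ∈ Q})
      ((fun j => (j, (1 : Fin 2))) '' {j | (j, 1) ∈ Q}) := by
    rw [Set.disjoint_left]
    rintro x ⟨a, _, rfl⟩ ⟨b, _, hb⟩
    simp at hb
  have hinj0 : Function.Injective (fun j : Fin t => (j, (0 : Fin 2))) := by
    intro a b h; simpa using h
  have hinj1 : Function.Injective (fun j : Fin t => (j, (1 : Fin 2))) := by
    intro a b h; simpa using h
  conv_lhs => rw [hQ]
  rw [Set.ncard_union_eq hdisj (Set.toFinite _) (Set.toFinite _),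
    Set.ncard_image_of_injective _ hinj0, Set.ncard_image_of_injective _ hinj1]

lemma path_count {m : ℕ} (P : Set (Fin m)) (M' : ℕ) (hlt : ∀ p ∈ P, (p : ℕ) < M')
    (h3 : ∀ x : ℕ, (∃ p ∈ P, (p : ℕ) = x) → (∃ p ∈ P, (p : ℕ) = x + 1) →
      (∃ p ∈ P, (p : ℕ) = x + 2) → False) :
    P.ncard ≤ M' - M' / 3 := by
  classical
  have hcard : P.ncard = (P.toFinset.image (Fin.val)).card := by
    rw [Set.ncard_eq_toFinset_card', Finset.card_image_of_injective _ Fin.val_injective]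
  rw [hcard]
  apply no3consec_card M'
  · intro x hx
    simp only [Finset.mem_image, Set.mem_toFinset] at hx
    obtain ⟨p, hp, rfl⟩ := hx
    exact hlt p hp
  · intro x hx hx1 hx2
    simp only [Finset.mem_image, Set.mem_toFinset] at hx hx1 hx2
    exact h3 x hx hx1 hx2

lemma ncard_le_card_fin {k : ℕ} (A : Set (Fin k)) : A.ncard ≤ k := by
  have := Set.ncard_le_ncard (Set.subset_univ A) (Set.toFinite _)
  simpa [Set.ncard_univ] using this


set_option maxHeartbeats 1000000 in
lemma upperB (n s t : ℕ) (h1 : 2 ≤ s + t) (h2 : 1 ≤ n - s - 2 * t) :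
    ∀ S : Set (Fin (n - s - 2*t) ⊕ (Fin s ⊕ Fin t × Fin 2)),
      IsDissocSet (Bgraph n s t) S → S.ncard ≤ s + 2 * t + ((n - s - 2*t - 1) - (n - s - 2*t - 1) / 3) := by
  set m := n - s - 2 * t with hm
  set K := s + 2 * t + ((m - 1) - (m - 1) / 3) with hK
  intro S hS
  set P : Set (Fin m) := {p | Sum.inl p ∈ S} with hP
  set Q1 : Set (Fin s) := {i | Sum.inr (Sum.inl i) ∈ S} with hQ1
  set B0 : Set (Fin t) := {j | Sum.inr (Sum.inr (j, 0)) ∈ S} with hB0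
  set B1 : Set (Fin t) := {j | Sum.inr (Sum.inr (j, 1)) ∈ S} with hB1
  have hdecomp : S.ncard = P.ncard + (Q1.ncard + (B0.ncard + B1.ncard)) := by
    have e1 : {a | Sum.inl a ∈ {b | Sum.inr b ∈ S}} = Q1 := by ext x; simp [hQ1]
    have e2 : {b | Sum.inr b ∈ {b | Sum.inr b ∈ S}} = {b | Sum.inr (Sum.inr b) ∈ S} := by
      ext x; simp
    have e3 : {j | (j, (0:Fin 2)) ∈ {b | Sum.inr (Sum.inr b) ∈ S}} = B0 := by
      ext x; simp [hB0]
    have e4 : {j | (j, (1:Fin 2)) ∈ {b | Sum.inr (Sum.inr b) ∈ S}} = B1 := by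
      ext x; simp [hB1]
    rw [ncard_sum_decomp S, ncard_sum_decomp {b | Sum.inr b ∈ S}, e1, e2,
      ncard_prod2_decomp {b | Sum.inr (Sum.inr b) ∈ S}, e3, e4]
  have hQ1s : Q1.ncard ≤ s := ncard_le_card_fin Q1
  have hB1t : B1.ncard ≤ t := ncard_le_card_fin B1
  have hB0t : B0.ncard ≤ t := ncard_le_card_fin B0
  -- P has no three consecutive
  have h3 : ∀ x : ℕ, (∃ p ∈ P, (p : ℕ) = x) → (∃ p ∈ P, (p : ℕ) = x + 1) →
      (∃ p ∈ P, (p : ℕ) = x + 2) → False := by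
    rintro x ⟨p0, hp0, hv0⟩ ⟨p1, hp1, hv1⟩ ⟨p2, hp2, hv2⟩
    have hmem := hS (Sum.inl p1) hp1
    have h01 : (Sum.inl p0 : Fin m ⊕ (Fin s ⊕ Fin t × Fin 2))
        ∈ {u ∈ S | (Bgraph n s t).Adj (Sum.inl p1) u} := by
      refine ⟨hp0, ?_⟩
      rw [adj_ll]
      omega
    have h21 : (Sum.inl p2 : Fin m ⊕ (Fin s ⊕ Fin t × Fin 2))
        ∈ {u ∈ S | (Bgraph n s t).Adj (Sum.inl p1) u} := by
      refine ⟨hp2, ?_⟩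
      rw [adj_ll]
      omega
    have hne : (Sum.inl p0 : Fin m ⊕ (Fin s ⊕ Fin t × Fin 2)) ≠ Sum.inl p2 := by
      intro h
      have : p0 = p2 := by simpa using h
      omega
    have : 1 < ({u ∈ S | (Bgraph n s t).Adj (Sum.inl p1) u}).ncard := by
      rw [Set.one_lt_ncard_iff (Set.toFinite _)]
      exact ⟨_, _, h01, h21, hne⟩
    exact absurd hmem (not_le.2 this)
  by_cases hlast : Sum.inl (⟨m - 1, by omega⟩ : Fin m) ∈ S
  · -- last path vertex in S
    have hPcard : P.ncard ≤ m - m / 3 := by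
      apply path_count P m (fun p _ => p.isLt) h3
    have hnbr := hS _ hlast
    have hQB : Q1.ncard + B0.ncard ≤ 1 := by
      set N := {u ∈ S | (Bgraph n s t).Adj (Sum.inl (⟨m - 1, by omega⟩ : Fin m)) u} with hN
      have hsub : (fun i : Fin s => (Sum.inr (Sum.inl i) : Fin m ⊕ (Fin s ⊕ Fin t × Fin 2))) '' Q1
          ∪ (fun j : Fin t => (Sum.inr (Sum.inr (j, (0 : Fin 2))) : Fin m ⊕ (Fin s ⊕ Fin t × Fin 2))) '' B0 ⊆ N := by
        rintro x (⟨i, hi, rfl⟩ | ⟨j, hj, rfl⟩)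
        · exact ⟨hi, by rw [adj_li]⟩
        · refine ⟨hj, ?_⟩
          rw [adj_lj]
          refine ⟨by simp [hm], rfl⟩
      have hdisj : Disjoint ((fun i : Fin s => (Sum.inr (Sum.inl i) : Fin m ⊕ (Fin s ⊕ Fin t × Fin 2))) '' Q1)
          ((fun j : Fin t => (Sum.inr (Sum.inr (j, (0 : Fin 2))) : Fin m ⊕ (Fin s ⊕ Fin t × Fin 2))) '' B0) := by
        rw [Set.disjoint_left]
        rintro x ⟨a, _, rfl⟩ ⟨b, _, hb⟩
        simp at hb
      have hinj0 : Function.Injective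
          (fun i : Fin s => (Sum.inr (Sum.inl i) : Fin m ⊕ (Fin s ⊕ Fin t × Fin 2))) := by
        intro a b h; simpa using h
      have hinj1 : Function.Injective
          (fun j : Fin t => (Sum.inr (Sum.inr (j, (0 : Fin 2)))
            : Fin m ⊕ (Fin s ⊕ Fin t × Fin 2))) := by
        intro a b h; simpa using h
      calc Q1.ncard + B0.ncard
          = ((fun i : Fin s => (Sum.inr (Sum.inl i) : Fin m ⊕ (Fin s ⊕ Fin t × Fin 2))) '' Q1
            ∪ (fun j : Fin t => (Sum.inr (Sum.inr (j, (0 : Fin 2))) : Fin m ⊕ (Fin s ⊕ Fin t × Fin 2))) '' B0).ncard := by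
            rw [Set.ncard_union_eq hdisj (Set.toFinite _) (Set.toFinite _),
              Set.ncard_image_of_injective _ hinj0, Set.ncard_image_of_injective _ hinj1]
        _ ≤ N.ncard := Set.ncard_le_ncard hsub (Set.toFinite _)
        _ ≤ 1 := hnbr
    omega
  · -- last path vertex not in S
    have hPcard : P.ncard ≤ (m - 1) - (m - 1) / 3 := by
      apply path_count P (m - 1) ?_ h3
      intro p hp
      have hlt := p.isLt
      by_contra hc
      have hpe : p = (⟨m - 1, by omega⟩ : Fin m) := by
        apply Fin.ext
        simp only
        omega
      exact hlast (hpe ▸ hp)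
    omega

set_option maxHeartbeats 1000000 in
lemma lowerB (n s t : ℕ) (h2 : 1 ≤ n - s - 2 * t) :
    ∃ S : Set (Fin (n - s - 2*t) ⊕ (Fin s ⊕ Fin t × Fin 2)),
      IsDissocSet (Bgraph n s t) S ∧
      S.ncard = s + 2 * t + ((n - s - 2*t - 1) - (n - s - 2*t - 1) / 3) := by
  set m := n - s - 2 * t with hm
  set K := s + 2 * t + ((m - 1) - (m - 1) / 3) with hK
  set A : Set (Fin m) := {p | (p : ℕ) < m - 1 ∧ (p : ℕ) % 3 ≠ 2} with hA
  refine ⟨Sum.inl '' A ∪ Set.range Sum.inr, ?_, ?_⟩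
  · rintro v hv
    rw [Set.ncard_le_one_iff (Set.toFinite _)]
    rintro a b ⟨haS, haAdj⟩ ⟨hbS, hbAdj⟩
    have memA : ∀ q : Fin m, Sum.inl q ∈ (Sum.inl '' A ∪ Set.range Sum.inr :
        Set (Fin m ⊕ (Fin s ⊕ Fin t × Fin 2))) → q ∈ A := by
      rintro q (⟨q', hq', hqe⟩ | ⟨y, hy⟩)
      · have : q' = q := by simpa using hqe
        exact this ▸ hq'
      · exact absurd hy (by simp)
    rcases hv with ⟨p, hp, rfl⟩ | ⟨w, rfl⟩
    · -- v = inl p with p ∈ A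
      have hplt : (p : ℕ) < m - 1 := hp.1
      have key : ∀ u, u ∈ (Sum.inl '' A ∪ Set.range Sum.inr :
          Set (Fin m ⊕ (Fin s ⊕ Fin t × Fin 2))) → (Bgraph n s t).Adj (Sum.inl p) u →
          ∃ q : Fin m, u = Sum.inl q ∧ q ∈ A ∧ ((p : ℕ) + 1 = q ∨ (q : ℕ) + 1 = p) := by
        intro u hu hadj
        rcases u with q | i | ⟨j, c⟩
        · rw [adj_ll] at hadj
          exact ⟨q, rfl, memA q hu, hadj⟩
        · rw [adj_li] at hadj
          omega
        · rw [adj_lj] at hadj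
          omega
      obtain ⟨qa, rfl, hqaA, hqa⟩ := key a haS haAdj
      obtain ⟨qb, rfl, hqbA, hqb⟩ := key b hbS hbAdj
      have : (qa : ℕ) = qb := by
        have h1 := hp.2
        have h2 := hqaA.2
        have h3 := hqbA.2
        omega
      have : qa = qb := Fin.ext this
      rw [this]
    · -- v = inr w
      rcases w with i | ⟨j, c⟩
      · exfalso
        -- the pendant i has no neighbor in the set: its only neighbor is inl (m-1) ∉ set
        have hnone : ∀ u, u ∈ (Sum.inl '' A ∪ Set.range Sum.inr :
            Set (Fin m ⊕ (Fin s ⊕ Fin t × Fin 2))) →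
            ¬ (Bgraph n s t).Adj (Sum.inr (Sum.inl i)) u := by
          intro u hu hadj
          rcases u with q | i' | ⟨j, c⟩
          · rw [SimpleGraph.adj_comm, adj_li] at hadj
            have := (memA q hu).1
            omega
          · exact adj_ii n s t hadj
          · exact adj_ij n s t hadj
        exact hnone a haS haAdj
      · have key : ∀ u, u ∈ (Sum.inl '' A ∪ Set.range Sum.inr :
            Set (Fin m ⊕ (Fin s ⊕ Fin t × Fin 2))) →
            (Bgraph n s t).Adj (Sum.inr (Sum.inr (j, c))) u →
            ∃ c' : Fin 2, u = Sum.inr (Sum.inr (j, c')) ∧ c' ≠ c := by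
          intro u hu hadj
          rcases u with q | i' | ⟨j', c'⟩
          · rw [SimpleGraph.adj_comm, adj_lj] at hadj
            have := (memA q hu).1
            omega
          · exact absurd hadj.symm (adj_ij n s t)
          · rw [adj_jj] at hadj
            obtain ⟨rfl, hcc⟩ := hadj
            refine ⟨c', rfl, ?_⟩
            rcases hcc with ⟨rfl, rfl⟩ | ⟨rfl, rfl⟩ <;> simp
        obtain ⟨ca, rfl, hca⟩ := key a haS haAdj
        obtain ⟨cb, rfl, hcb⟩ := key b hbS hbAdj
        have hcab : ca = cb := by omega
        rw [hcab]
  · -- cardinality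
    have hdisj : Disjoint (Sum.inl '' A)
        (Set.range (Sum.inr : (Fin s ⊕ Fin t × Fin 2) → _)) := by
      rw [Set.disjoint_left]
      rintro x ⟨a, _, rfl⟩ ⟨b, hb⟩
      exact Sum.inl_ne_inr hb.symm
    rw [Set.ncard_union_eq hdisj (Set.toFinite _) (Set.toFinite _),
      Set.ncard_image_of_injective _ Sum.inl_injective]
    have hrange : (Set.range (Sum.inr : (Fin s ⊕ Fin t × Fin 2) →
        Fin m ⊕ (Fin s ⊕ Fin t × Fin 2))).ncard = s + 2 * t := by
      rw [← Set.image_univ, Set.ncard_image_of_injective _ Sum.inr_injective,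
        Set.ncard_univ, Nat.card_eq_fintype_card]
      simp [Fintype.card_sum, Fintype.card_prod]
      ring
    have hAcard : A.ncard = (m - 1) - (m - 1) / 3 := by
      rw [Set.ncard_eq_toFinset_card']
      have himg : A.toFinset.image Fin.val
          = (Finset.range (m - 1)).filter (fun x => x % 3 ≠ 2) := by
        ext x
        simp only [Finset.mem_image, Set.mem_toFinset, Finset.mem_filter,
          Finset.mem_range, hA, Set.mem_setOf_eq]
        constructor
        · rintro ⟨p, ⟨hp1, hp2⟩, rfl⟩
          exact ⟨hp1, hp2⟩
        · rintro ⟨hx1, hx2⟩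
          exact ⟨⟨x, by omega⟩, ⟨hx1, hx2⟩, rfl⟩
      have := count_mod3 (m - 1)
      rw [← himg] at this
      rw [← this, Finset.card_image_of_injective _ Fin.val_injective]
    rw [hrange, hAcard, hK]
    omega

/-- For nonnegative integers `n, s, t` with `s + t ≥ 2` and `n - s - 2t ≥ 1`,
`diss(B(n,s,t)) = s + 2t + ⌈2(n-s-2t-1)/3⌉` (where `⌈2m/3⌉ = (2m+2)/3` in `ℕ`). -/
theorem dissNum_Bgraph (n s t : ℕ) (h1 : 2 ≤ s + t) (h2 : 1 ≤ n - s - 2 * t) :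
    dissNum (Bgraph n s t) = s + 2 * t + (2 * (n - s - 2 * t - 1) + 2) / 3 := by
  have hgoal : s + 2 * t + (2 * (n - s - 2 * t - 1) + 2) / 3
      = s + 2 * t + ((n - s - 2 * t - 1) - (n - s - 2 * t - 1) / 3) := by omega
  rw [hgoal]
  obtain ⟨S0, hS0, hS0card⟩ := lowerB n s t h2
  have hmem : s + 2 * t + ((n - s - 2 * t - 1) - (n - s - 2 * t - 1) / 3)
      ∈ {k | ∃ S : Set (Fin (n - s - 2 * t) ⊕ (Fin s ⊕ Fin t × Fin 2)),
        IsDissocSet (Bgraph n s t) S ∧ S.ncard = k} := ⟨S0, hS0, hS0card⟩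
  have hbdd : ∀ k ∈ {k | ∃ S : Set (Fin (n - s - 2 * t) ⊕ (Fin s ⊕ Fin t × Fin 2)),
      IsDissocSet (Bgraph n s t) S ∧ S.ncard = k},
      k ≤ s + 2 * t + ((n - s - 2 * t - 1) - (n - s - 2 * t - 1) / 3) := by
    rintro k ⟨S, hS, rfl⟩
    exact upperB n s t h1 h2 S hS
  exact le_antisymm (csSup_le ⟨_, hmem⟩ hbdd) (le_csSup ⟨_, hbdd⟩ hmem)
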